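/- arXiv:2212.04121 — 3 statements merged into one kernel-verified Lean document; each statement's English description precedes it below -/
import Mathlib

section
/- For every real t in the range log_3(2) ≤ t ≤ 2/3, the squares S^t_n of side length n^{-t} for n = 1, 2, 3, ... can be packed perfectly into the rectangle of dimensions ζ(2t) × 1. That is, there exist positions (x_n, y_n) ∈ ℝ² for each positive integer n such that each axis-parallel square [x_n, x_n + n^{-t}] × [y_n, y_n + n^{-t}] is contained in the rectangle [0, ζ(2t)] × [0, 1], and the interiors of distinct squares are pairwise disjoint. (The packing is perfect since the total area ∑_{n=1}^∞ n^{-2t} = ζ(2t) equals the area of the rectangle.) -/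
/-- The real zeta function as the series `∑_{i=1}^∞ i^{-s}` (for `s > 1`). -/
noncomputable def zetaR (s : ℝ) : ℝ := ∑' n : ℕ+, (n : ℝ) ^ (-s)

/-!
The squares are placed greedily, in decreasing order. The free part of the rectangle is kept as a
finite list of strips, each with a distinguished side, its thickness, never smaller than the next
square. The square of side `a m` goes into the corner of a strip whose other side, its length, is
at least `a m`; the rest of that strip becomes a strip of the same thickness and a strip of
thickness `a m`. After `m` squares the total thickness is therefore `1 + ∑_{k<m} a k` and the free
area is `ζ(2t) - ∑_{k<m} a k ^ 2`, so a long enough strip exists as soon as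
`a m * (1 + ∑_{k<m} a k) < ζ(2t) - ∑_{k<m} a k ^ 2`. For `a k = (k + 1) ^ (-t)` both sides are
compared with integrals of `x ^ (-t)` and `x ^ (-2t)` through tangent-line bounds, and the
inequality comes down to `2t - 1 ≤ 1 - t` and `2 (2t - 1) < 1`.
-/

namespace PerfectPacking

open Set Finset

def box (p : ℝ × ℝ) (w h : ℝ) : Set (ℝ × ℝ) := Icc p.1 (p.1 + w) ×ˢ Icc p.2 (p.2 + h)

theorem interior_box (p : ℝ × ℝ) (w h : ℝ) :
    interior (box p w h) = Ioo p.1 (p.1 + w) ×ˢ Ioo p.2 (p.2 + h) := by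
  rw [box, interior_prod_eq, interior_Icc, interior_Icc]

theorem box_subset_box {p q : ℝ × ℝ} {w h w' h' : ℝ} (h₁ : q.1 ≤ p.1) (h₂ : p.1 + w ≤ q.1 + w')
    (h₃ : q.2 ≤ p.2) (h₄ : p.2 + h ≤ q.2 + h') : box p w h ⊆ box q w' h' :=
  prod_mono (Icc_subset_Icc h₁ h₂) (Icc_subset_Icc h₃ h₄)

theorem disjoint_interior_box_of_fst_le {p q : ℝ × ℝ} {w h w' h' : ℝ} (hpq : p.1 + w ≤ q.1) :
    Disjoint (interior (box p w h)) (interior (box q w' h')) := by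
  rw [interior_box, interior_box, disjoint_prod]
  exact Or.inl (Ioo_disjoint_Ioo.2 (by simp [hpq]))

theorem disjoint_interior_box_of_snd_le {p q : ℝ × ℝ} {w h w' h' : ℝ} (hpq : p.2 + h ≤ q.2) :
    Disjoint (interior (box p w h)) (interior (box q w' h')) := by
  rw [interior_box, interior_box, disjoint_prod]
  exact Or.inr (Ioo_disjoint_Ioo.2 (by simp [hpq]))

/-- An axis-parallel rectangle together with a choice of one of its sides as its `thickness`:
the height if `horizontal`, the width otherwise. -/
structure Strip where
  corner : ℝ × ℝ
  width : ℝ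
  height : ℝ
  horizontal : Bool

namespace Strip

def toSet (r : Strip) : Set (ℝ × ℝ) := box r.corner r.width r.height

def area (r : Strip) : ℝ := r.width * r.height

def thickness (r : Strip) : ℝ := if r.horizontal then r.height else r.width

def length (r : Strip) : ℝ := if r.horizontal then r.width else r.height

theorem area_eq_length_mul_thickness (r : Strip) : r.area = r.length * r.thickness := by
  cases h : r.horizontal <;> simp [area, length, thickness, h, mul_comm]

/-- What remains of `r` once the square of side `s` is cut off its corner: the part beyond the
square along the length, of the same thickness, and the part beside the square, of thickness `s`.
-/
def split (r : Strip) (s : ℝ) : Strip × Strip :=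
  if r.horizontal then
    (⟨(r.corner.1 + s, r.corner.2), r.width - s, r.height, true⟩,
      ⟨(r.corner.1, r.corner.2 + s), s, r.height - s, false⟩)
  else
    (⟨(r.corner.1, r.corner.2 + s), r.width, r.height - s, false⟩,
      ⟨(r.corner.1 + s, r.corner.2), r.width - s, s, true⟩)

variable (r : Strip) (s : ℝ)

theorem thickness_split_fst : (r.split s).1.thickness = r.thickness := by
  cases h : r.horizontal <;> simp [split, thickness, h]

theorem thickness_split_snd : (r.split s).2.thickness = s := by
  cases h : r.horizontal <;> simp [split, thickness, h]

theorem area_split : (r.split s).1.area + (r.split s).2.area = r.area - s ^ 2 := by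
  cases h : r.horizontal <;> simp only [area, split, h, Bool.false_eq_true, ↓reduceIte] <;> ring

variable {r s}

theorem box_corner_subset (hw : s ≤ r.width) (hh : s ≤ r.height) :
    box r.corner s s ⊆ r.toSet :=
  box_subset_box le_rfl (by linarith) le_rfl (by linarith)

theorem split_fst_subset (hs : 0 ≤ s) : (r.split s).1.toSet ⊆ r.toSet := by
  cases h : r.horizontal <;> simp only [split, h, toSet, Bool.false_eq_true, ↓reduceIte] <;>
    apply box_subset_box <;> linarith

theorem split_snd_subset (hs : 0 ≤ s) (hw : s ≤ r.width) (hh : s ≤ r.height) :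
    (r.split s).2.toSet ⊆ r.toSet := by
  cases h : r.horizontal <;> simp only [split, h, toSet, Bool.false_eq_true, ↓reduceIte] <;>
    apply box_subset_box <;> linarith

theorem disjoint_box_corner_split_fst :
    Disjoint (interior (box r.corner s s)) (interior (r.split s).1.toSet) := by
  cases h : r.horizontal <;> simp only [split, h, toSet, Bool.false_eq_true, ↓reduceIte]
  · exact disjoint_interior_box_of_snd_le le_rfl
  · exact disjoint_interior_box_of_fst_le le_rfl

theorem disjoint_box_corner_split_snd :
    Disjoint (interior (box r.corner s s)) (interior (r.split s).2.toSet) := by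
  cases h : r.horizontal <;> simp only [split, h, toSet, Bool.false_eq_true, ↓reduceIte]
  · exact disjoint_interior_box_of_fst_le le_rfl
  · exact disjoint_interior_box_of_snd_le le_rfl

theorem disjoint_split_fst_snd :
    Disjoint (interior (r.split s).1.toSet) (interior (r.split s).2.toSet) := by
  cases h : r.horizontal <;> simp only [split, h, toSet, Bool.false_eq_true, ↓reduceIte]
  · exact (disjoint_interior_box_of_snd_le le_rfl).symm
  · exact (disjoint_interior_box_of_fst_le le_rfl).symm

theorem le_width_and_height (hl : s ≤ r.length) (ht : s ≤ r.thickness) :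
    s ≤ r.width ∧ s ≤ r.height := by
  cases h : r.horizontal <;> simp only [length, thickness, h, Bool.false_eq_true, ↓reduceIte]
    at hl ht <;> exact ⟨by assumption, by assumption⟩

theorem exists_le_length {l : List Strip} (hl : ∀ r ∈ l, 0 ≤ r.thickness)
    (h : s * (l.map thickness).sum < (l.map area).sum) : ∃ r ∈ l, s ≤ r.length := by
  by_contra! hlt
  refine h.not_ge ?_
  rw [← List.sum_map_mul_left]
  refine List.sum_le_sum fun r hr => ?_
  rw [area_eq_length_mul_thickness]
  exact mul_le_mul_of_nonneg_right (hlt r hr).le (hl r hr)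

end Strip

open Strip

/-- The state of the greedy packing of `[0, W] × [0, H]` after `m` squares: square `k` has side
`a k` and lower-left corner `pos k`, and `strips` are the free rectangles left for the others. -/
structure IsPartialPacking (a : ℕ → ℝ) (W H : ℝ) (m : ℕ) (strips : List Strip)
    (pos : ℕ → ℝ × ℝ) : Prop where
  strip_subset : ∀ r ∈ strips, r.toSet ⊆ box 0 W H
  le_thickness : ∀ r ∈ strips, a m ≤ r.thickness
  sum_area : (strips.map area).sum = W * H - ∑ k ∈ range m, a k ^ 2
  sum_thickness : (strips.map thickness).sum = H + ∑ k ∈ range m, a k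
  square_subset : ∀ k < m, box (pos k) (a k) (a k) ⊆ box 0 W H
  disjoint_squares : ∀ k l, k < l → l < m →
    Disjoint (interior (box (pos k) (a k) (a k))) (interior (box (pos l) (a l) (a l)))
  disjoint_square_strip : ∀ k < m, ∀ r ∈ strips,
    Disjoint (interior (box (pos k) (a k) (a k))) (interior r.toSet)
  pairwise_disjoint_strips :
    strips.Pairwise fun r r' => Disjoint (interior r.toSet) (interior r'.toSet)

namespace IsPartialPacking

variable {a : ℕ → ℝ} {W H : ℝ} {m : ℕ} {strips strips' : List Strip} {pos : ℕ → ℝ × ℝ}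

theorem init (haH : a 0 ≤ H) : IsPartialPacking a W H 0 [⟨0, W, H, true⟩] pos where
  strip_subset := by simp [toSet]
  le_thickness := by simpa [thickness] using haH
  sum_area := by simp [area]
  sum_thickness := by simp [thickness]
  square_subset := by simp
  disjoint_squares := by simp
  disjoint_square_strip := by simp
  pairwise_disjoint_strips := List.pairwise_singleton _ _

theorem perm (hS : IsPartialPacking a W H m strips pos) (hp : strips.Perm strips') :
    IsPartialPacking a W H m strips' pos where
  strip_subset r hr := hS.strip_subset r (hp.mem_iff.2 hr)
  le_thickness r hr := hS.le_thickness r (hp.mem_iff.2 hr)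
  sum_area := by rw [← (hp.map area).sum_eq, hS.sum_area]
  sum_thickness := by rw [← (hp.map thickness).sum_eq, hS.sum_thickness]
  square_subset := hS.square_subset
  disjoint_squares := hS.disjoint_squares
  disjoint_square_strip k hk r hr := hS.disjoint_square_strip k hk r (hp.mem_iff.2 hr)
  pairwise_disjoint_strips := (hp.pairwise_iff fun h => h.symm).1 hS.pairwise_disjoint_strips

theorem split_cons {r : Strip} (hS : IsPartialPacking a W H m (r :: strips) pos)
    (ha : Antitone a) (ha0 : 0 ≤ a m) (hlen : a m ≤ r.length) :
    IsPartialPacking a W H (m + 1) ((r.split (a m)).1 :: (r.split (a m)).2 :: strips)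
      (Function.update pos m r.corner) := by
  obtain ⟨hw, hh⟩ := le_width_and_height hlen (hS.le_thickness r List.mem_cons_self)
  have hsq : box r.corner (a m) (a m) ⊆ r.toSet := box_corner_subset hw hh
  have hA : (r.split (a m)).1.toSet ⊆ r.toSet := split_fst_subset ha0
  have hB : (r.split (a m)).2.toSet ⊆ r.toSet := split_snd_subset ha0 hw hh
  have hsub (r' : Strip) (hr' : r' ∈ (r.split (a m)).1 :: (r.split (a m)).2 :: strips) :
      r'.toSet ⊆ r.toSet ∨ r' ∈ r :: strips := by
    rcases hr' with _ | ⟨_, _ | ⟨_, hr'⟩⟩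
    exacts [.inl hA, .inl hB, .inr (.tail _ hr')]
  have hr := hS.strip_subset r List.mem_cons_self
  have hr_disj := (List.pairwise_cons.1 hS.pairwise_disjoint_strips).1
  have hnext : a (m + 1) ≤ a m := ha m.le_succ
  have hpos (k : ℕ) (hk : k < m) : Function.update pos m r.corner k = pos k :=
    Function.update_of_ne hk.ne _ _
  have hold (k : ℕ) (hk : k < m) := hS.disjoint_square_strip k hk
  refine ⟨fun r' hr' => (hsub r' hr').elim (·.trans hr) (hS.strip_subset r'), ?_, ?_, ?_, ?_, ?_,
    ?_, ?_⟩
  · rintro r' (_ | ⟨_, _ | ⟨_, hr'⟩⟩)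
    · exact thickness_split_fst r _ ▸ hnext.trans (hS.le_thickness r List.mem_cons_self)
    · exact thickness_split_snd r _ ▸ hnext
    · exact hnext.trans (hS.le_thickness r' (.tail _ hr'))
  · have := hS.sum_area
    simp only [List.map_cons, List.sum_cons, sum_range_succ] at this ⊢
    linarith [area_split r (a m)]
  · have := hS.sum_thickness
    simp only [List.map_cons, List.sum_cons, sum_range_succ, thickness_split_fst,
      thickness_split_snd] at this ⊢
    linarith
  · intro k hk
    rcases Nat.lt_succ_iff_lt_or_eq.1 hk with hk | rfl
    · rw [hpos k hk]; exact hS.square_subset k hk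
    · rw [Function.update_self]; exact hsq.trans hr
  · intro k l hkl hl
    rw [hpos k (by omega)]
    rcases Nat.lt_succ_iff_lt_or_eq.1 hl with hl | rfl
    · rw [hpos l hl]; exact hS.disjoint_squares k l hkl hl
    · rw [Function.update_self]
      exact (hold k hkl r List.mem_cons_self).mono_right (interior_mono hsq)
  · intro k hk r' hr'
    rcases Nat.lt_succ_iff_lt_or_eq.1 hk with hk | rfl
    · rw [hpos k hk]
      exact (hsub r' hr').elim
        (fun h => (hold k hk r List.mem_cons_self).mono_right (interior_mono h)) (hold k hk r')
    · rw [Function.update_self]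
      rcases hr' with _ | ⟨_, _ | ⟨_, hr'⟩⟩
      · exact disjoint_box_corner_split_fst
      · exact disjoint_box_corner_split_snd
      · exact (hr_disj r' hr').mono_left (interior_mono hsq)
  · refine .cons ?_ (.cons ?_ (List.pairwise_cons.1 hS.pairwise_disjoint_strips).2)
    · rintro r' (_ | ⟨_, hr'⟩)
      · exact disjoint_split_fst_snd
      · exact (hr_disj r' hr').mono_left (interior_mono hA)
    · exact fun r' hr' => (hr_disj r' hr').mono_left (interior_mono hB)

theorem exists_succ (hS : IsPartialPacking a W H m strips pos) (ha : Antitone a)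
    (ha0 : 0 ≤ a m)
    (hgreedy : a m * (H + ∑ k ∈ range m, a k) < W * H - ∑ k ∈ range m, a k ^ 2) :
    ∃ strips' pos', IsPartialPacking a W H (m + 1) strips' pos' ∧ ∀ k < m, pos' k = pos k := by
  classical
  obtain ⟨r, hr, hlen⟩ := exists_le_length (l := strips)
    (fun r hr => ha0.trans (hS.le_thickness r hr)) (by rwa [hS.sum_thickness, hS.sum_area])
  exact ⟨_, _, ((hS.perm (List.perm_cons_erase hr)).split_cons ha ha0 hlen),
    fun k hk => Function.update_of_ne hk.ne _ _⟩

end IsPartialPacking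

theorem exists_packing_of_greedy {a : ℕ → ℝ} {W H : ℝ} (ha : Antitone a) (ha0 : ∀ k, 0 ≤ a k)
    (haH : a 0 ≤ H)
    (hgreedy : ∀ m, a m * (H + ∑ k ∈ range m, a k) < W * H - ∑ k ∈ range m, a k ^ 2) :
    ∃ p : ℕ → ℝ × ℝ, (∀ n, box (p n) (a n) (a n) ⊆ box 0 W H) ∧
      Pairwise fun m n =>
        Disjoint (interior (box (p m) (a m) (a m))) (interior (box (p n) (a n) (a n))) := by
  choose! nextStrips nextPos hnext using fun m strips pos
    (hS : IsPartialPacking a W H m strips pos) => hS.exists_succ ha (ha0 m) (hgreedy m)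
  obtain ⟨state, hstate0, hstate⟩ : ∃ state : ℕ → List Strip × (ℕ → ℝ × ℝ),
      state 0 = ([⟨0, W, H, true⟩], 0) ∧
        ∀ m, state (m + 1) = (nextStrips m (state m).1 (state m).2,
          nextPos m (state m).1 (state m).2) :=
    ⟨fun m => Nat.rec ([⟨0, W, H, true⟩], 0)
      (fun m S => (nextStrips m S.1 S.2, nextPos m S.1 S.2)) m, rfl, fun _ => rfl⟩
  have hvalid (m : ℕ) : IsPartialPacking a W H m (state m).1 (state m).2 := by
    induction m with
    | zero => rw [hstate0]; exact .init haH
    | succ m ih => rw [hstate]; exact (hnext m _ _ ih).1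
  have hstable (m k : ℕ) (hk : k < m) : (state m).2 k = (state (k + 1)).2 k := by
    induction m with
    | zero => omega
    | succ m ih =>
      rcases Nat.lt_succ_iff_lt_or_eq.1 hk with hk | rfl
      · rw [hstate]; exact ((hnext m _ _ (hvalid m)).2 k hk).trans (ih hk)
      · rfl
  have hdisj (k l : ℕ) (hkl : k < l) :=
    hstable (l + 1) k (by omega) ▸ (hvalid (l + 1)).disjoint_squares k l hkl l.lt_succ_self
  refine ⟨fun n => (state (n + 1)).2 n, fun n => (hvalid (n + 1)).square_subset n n.lt_succ_self,
    fun k l hkl => ?_⟩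
  rcases hkl.lt_or_gt with h | h
  exacts [hdisj k l h, (hdisj l k h).symm]

section Estimates

open Real Filter

theorem rpow_add_le_tangent {x s q : ℝ} (hx : 0 < x) (hs : -x ≤ s) (hq0 : 0 ≤ q) (hq1 : q ≤ 1) :
    (x + s) ^ q ≤ x ^ q + q * x ^ (q - 1) * s := by
  have hsx : -1 ≤ s / x := by rw [le_div_iff₀ hx]; linarith
  have hxs : x + s = x * (1 + s / x) := by field_simp
  rw [hxs, mul_rpow hx.le (by linarith), rpow_sub_one hx.ne']
  calc x ^ q * (1 + s / x) ^ q ≤ x ^ q * (1 + q * (s / x)) := by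
        gcongr; exact rpow_one_add_le_one_add_mul_self hsx hq0 hq1
    _ = x ^ q + q * (x ^ q / x) * s := by ring

theorem one_sub_mul_sum_rpow_neg_le {t : ℝ} (ht0 : 0 ≤ t) (ht1 : t ≤ 1) (m : ℕ) :
    (1 - t) * ∑ k ∈ range m, ((k : ℝ) + 2) ^ (-t) ≤ ((m : ℝ) + 1) ^ (1 - t) - 1 := by
  have htele := sum_range_sub (fun k : ℕ => ((k : ℝ) + 1) ^ (1 - t)) m
  simp only [Nat.cast_add, Nat.cast_one, CharP.cast_eq_zero, zero_add, one_rpow] at htele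
  rw [← htele, mul_sum]
  refine sum_le_sum fun k _ => ?_
  have hx : (0 : ℝ) < k + 2 := by positivity
  have h := rpow_add_le_tangent hx (s := -1) (by linarith) (by linarith) (by linarith : 1 - t ≤ 1)
  rw [show (1 - t - 1) = -t by ring, show (k : ℝ) + 2 + -1 = k + 1 by ring] at h
  rw [show (k : ℝ) + 1 + 1 = k + 2 by ring]
  linarith

theorem rpow_neg_sub_rpow_neg_add_one_le {x r : ℝ} (hx : 0 < x) (hr0 : 0 ≤ r) (hr1 : r ≤ 1) :
    x ^ (-r) - (x + 1) ^ (-r) ≤ r * x ^ (-(r + 1)) := by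
  have hu : 0 < x ^ r := rpow_pos_of_pos hx r
  have huv : x ^ r ≤ (x + 1) ^ r := rpow_le_rpow hx.le (by linarith) hr0
  have hv : (x + 1) ^ r ≤ x ^ r + r * (x ^ r / x) := by
    simpa [rpow_sub_one hx.ne'] using rpow_add_le_tangent hx (s := 1) (by linarith) hr0 hr1
  rw [rpow_neg hx.le, rpow_neg (by linarith), rpow_neg hx.le, rpow_add hx, rpow_one]
  rw [inv_sub_inv hu.ne' (by linarith), div_le_iff₀ (by positivity)]
  calc (x + 1) ^ r - x ^ r ≤ r * (x ^ r / x) := by linarith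
    _ ≤ r * ((x + 1) ^ r / x) := by gcongr
    _ = r * (x ^ r * x)⁻¹ * (x ^ r * (x + 1) ^ r) := by field_simp

theorem le_tsum_of_sub_succ_le {f g : ℕ → ℝ} (hf : Summable f) (hg : Tendsto g atTop (nhds 0))
    (h : ∀ k, g k - g (k + 1) ≤ f k) : g 0 ≤ ∑' k, f k := by
  have hpartial : ∀ N, g 0 - g N ≤ ∑ k ∈ range N, f k := fun N => by
    rw [← sum_range_sub' g N]; exact sum_le_sum fun k _ => h k
  simpa using
    le_of_tendsto_of_tendsto' (tendsto_const_nhds.sub hg) hf.hasSum.tendsto_sum_nat hpartial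

theorem summable_nat_add_one_rpow_neg {s : ℝ} (hs : 1 < s) :
    Summable fun k : ℕ => ((k : ℝ) + 1) ^ (-s) := by
  simpa using (summable_nat_add_iff 1).2 (summable_nat_rpow.2 (by linarith : -s < -1))

theorem zetaR_sub_sum_eq_tsum {s : ℝ} (hs : 1 < s) (m : ℕ) :
    zetaR s - ∑ k ∈ range m, ((k : ℝ) + 1) ^ (-s) = ∑' k : ℕ, ((k : ℝ) + m + 1) ^ (-s) := by
  have hsplit := (summable_nat_add_one_rpow_neg hs).sum_add_tsum_nat_add m
  rw [zetaR, tsum_pnat_eq_tsum_succ (f := fun n : ℕ => (n : ℝ) ^ (-s)), sub_eq_iff_eq_add']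
  push_cast at hsplit ⊢
  rw [← hsplit]

theorem rpow_div_le_zetaR_sub_sum {s : ℝ} (hs1 : 1 < s) (hs2 : s ≤ 2) (m : ℕ) :
    ((m : ℝ) + 1) ^ (1 - s) / (s - 1) ≤ zetaR s - ∑ k ∈ range m, ((k : ℝ) + 1) ^ (-s) := by
  rw [zetaR_sub_sum_eq_tsum hs1]
  have hsum : Summable fun k : ℕ => ((k : ℝ) + m + 1) ^ (-s) := by
    simpa [add_right_comm, add_assoc] using
      (summable_nat_add_iff m).2 (summable_nat_add_one_rpow_neg hs1)
  have hlim : Tendsto (fun k : ℕ => ((k : ℝ) + m + 1) ^ (1 - s) / (s - 1)) atTop (nhds 0) := by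
    have h := (tendsto_rpow_neg_atTop (by linarith : 0 < s - 1)).comp
      (tendsto_atTop_add_const_right _ ((m : ℝ) + 1) tendsto_natCast_atTop_atTop)
    simpa [Function.comp_def, add_assoc] using h.div_const (s - 1)
  have hstep (k : ℕ) : ((k : ℝ) + m + 1) ^ (1 - s) / (s - 1)
      - (((k + 1 : ℕ) : ℝ) + m + 1) ^ (1 - s) / (s - 1) ≤ ((k : ℝ) + m + 1) ^ (-s) := by
    have h := rpow_neg_sub_rpow_neg_add_one_le (by positivity : (0 : ℝ) < k + m + 1)
      (by linarith : 0 ≤ s - 1) (by linarith : s - 1 ≤ 1)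
    rw [neg_sub, show s - 1 + 1 = s by ring] at h
    rw [← sub_div, div_le_iff₀ (by linarith), Nat.cast_succ, add_right_comm _ 1, add_right_comm _ 1]
    linarith
  simpa using le_tsum_of_sub_succ_le hsum hlim hstep

theorem one_half_lt_logb_three_two : 1 / 2 < logb 3 2 := by
  rw [lt_logb_iff_rpow_lt (by norm_num) (by norm_num), ← sqrt_eq_rpow,
    sqrt_lt' (by norm_num)]
  norm_num

theorem mul_one_add_sum_lt_zetaR_sub_sum {t : ℝ} (ht1 : 1 / 2 < t) (ht2 : t ≤ 2 / 3) (m : ℕ) :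
    ((m : ℝ) + 1) ^ (-t) * (1 + ∑ k ∈ range m, ((k : ℝ) + 1) ^ (-t)) <
      zetaR (2 * t) - ∑ k ∈ range m, (((k : ℝ) + 1) ^ (-t)) ^ 2 := by
  have hsq (k : ℕ) : (((k : ℝ) + 1) ^ (-t)) ^ 2 = ((k : ℝ) + 1) ^ (-(2 * t)) := by
    rw [← rpow_natCast, ← rpow_mul (by positivity)]; ring_nf
  simp only [hsq]
  refine lt_of_lt_of_le ?_ (rpow_div_le_zetaR_sub_sum (by linarith) (by linarith) m)
  have hm : (0 : ℝ) < m + 1 := by positivity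
  rw [show 1 - 2 * t = -t + (1 - t) by ring, rpow_add hm, mul_div_assoc]
  refine mul_lt_mul_of_pos_left ?_ (rpow_pos_of_pos hm _)
  rw [lt_div_iff₀' (by linarith)]
  cases m with
  | zero =>
    simp only [Finset.range_zero, sum_empty, add_zero, mul_one, CharP.cast_eq_zero, zero_add,
      one_rpow]
    linarith
  | succ n =>
    have hsum := one_sub_mul_sum_rpow_neg_le (by linarith) (by linarith) n
    have hnonneg : 0 ≤ ∑ k ∈ range n, ((k : ℝ) + 2) ^ (-t) := sum_nonneg fun k _ => by positivity
    have hmono : ((n : ℝ) + 1) ^ (1 - t) ≤ (((n + 1 : ℕ) : ℝ) + 1) ^ (1 - t) :=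
      rpow_le_rpow (by positivity) (by push_cast; linarith) (by linarith)
    rw [sum_range_succ']
    push_cast at hmono ⊢
    simp only [add_assoc, one_add_one_eq_two, zero_add, one_rpow] at hmono ⊢
    -- `(2t - 1) ∑ ≤ (1 - t) ∑ ≤ (n + 1) ^ (1 - t) - 1` and `2 (2t - 1) < 1`
    nlinarith [mul_nonneg (by linarith : (0 : ℝ) ≤ 2 - 3 * t) hnonneg]

end Estimates

end PerfectPacking

/-- For every `t` with `log_3 2 ≤ t ≤ 2/3`, the squares of side `n^{-t}` (`n ≥ 1`) can be
packed perfectly into the rectangle `[0, ζ(2t)] × [0, 1]`. -/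
theorem perfect_packing_range (t : ℝ) (ht₁ : Real.logb 3 2 ≤ t) (ht₂ : t ≤ 2 / 3) :
    ∃ x y : ℕ+ → ℝ,
      (∀ n : ℕ+,
        Set.Icc (x n) (x n + (n : ℝ) ^ (-t)) ×ˢ
            Set.Icc (y n) (y n + (n : ℝ) ^ (-t)) ⊆
          Set.Icc (0 : ℝ) (zetaR (2 * t)) ×ˢ Set.Icc (0 : ℝ) 1) ∧
      (∀ m n : ℕ+, m ≠ n →
        Disjoint
          (Set.Ioo (x m) (x m + (m : ℝ) ^ (-t)) ×ˢ
            Set.Ioo (y m) (y m + (m : ℝ) ^ (-t)))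
          (Set.Ioo (x n) (x n + (n : ℝ) ^ (-t)) ×ˢ
            Set.Ioo (y n) (y n + (n : ℝ) ^ (-t)))) := by
  open PerfectPacking in
  have ht : 1 / 2 < t := one_half_lt_logb_three_two.trans_le ht₁
  obtain ⟨p, hsub, hdisj⟩ := exists_packing_of_greedy (a := fun k : ℕ => ((k : ℝ) + 1) ^ (-t))
    (W := zetaR (2 * t)) (H := 1)
    (fun k l hkl => Real.rpow_le_rpow_of_nonpos (by positivity) (by gcongr) (by linarith))
    (fun k => by positivity) (by simp)
    (fun m => by simpa [add_comm] using mul_one_add_sum_lt_zetaR_sub_sum ht ht₂ m)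
  have hside (n : ℕ+) : (n.natPred : ℝ) + 1 = n := by exact_mod_cast n.natPred_add_one
  refine ⟨fun n => (p n.natPred).1, fun n => (p n.natPred).2, fun n => ?_, fun m n hmn => ?_⟩
  · simpa [box, hside] using hsub n.natPred
  · simpa [interior_box, hside] using hdisj (PNat.natPred_injective.ne hmn)
end

section
/- The function f(t) = ζ(2t) − 2·3^{-t} is (strictly) decreasing on the interval [log_3(2), 2/3]: for all real s, t with log_3(2) ≤ s < t ≤ 2/3, we have ζ(2s) − 2·3^{-s} > ζ(2t) − 2·3^{-t}. -/
/-!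
Split `ζ(2t) - 2·3^{-t}` as `truncF t = 2^{-2t} + 3^{-2t} + 4^{-2t} - 2·3^{-t}` plus
`1 + ∑_{n ≥ 5} n^{-2t}`. The second part is antitone termwise. On the interval, `3^{-t} < 1/2`
because `t > log_3 2`, while `2t ≤ 4/3` keeps `2^{-2t}`, `3^{-2t}`, `4^{-2t}` large enough to
make the derivative of `truncF` negative.
-/

open Real

lemma summable_pnat_rpow_neg {p : ℝ} (hp : 1 < p) : Summable fun n : ℕ+ => (n : ℝ) ^ (-p) :=
  (summable_nat_rpow.2 (neg_lt_neg hp)).comp_injective PNat.coe_injective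

lemma sum_sub_le_zetaR_sub (S : Finset ℕ+) {p q : ℝ} (hp : 1 < p) (hpq : p ≤ q) :
    ∑ n ∈ S, ((n : ℝ) ^ (-p) - (n : ℝ) ^ (-q)) ≤ zetaR p - zetaR q := by
  have hsp := summable_pnat_rpow_neg hp
  have hsq := summable_pnat_rpow_neg (hp.trans_le hpq)
  rw [zetaR, zetaR, ← hsp.tsum_sub hsq]
  refine (hsp.sub hsq).sum_le_tsum S fun n _ => sub_nonneg.2 ?_
  exact rpow_le_rpow_of_exponent_le (mod_cast n.pos) (neg_le_neg hpq)

lemma le_rpow_neg_div_of_pow_mul_pow_le_one {a c : ℝ} {m n : ℕ} (ha : 0 < a)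
    (hn : n ≠ 0) (h : c ^ n * a ^ m ≤ 1) : c ≤ a ^ (-(m / n : ℝ)) := by
  have hpow : (a ^ (-(m / n : ℝ))) ^ n = (a ^ m)⁻¹ := by
    rw [← rpow_natCast, ← rpow_mul ha.le, neg_mul, div_mul_cancel₀ _ (mod_cast hn), rpow_neg ha.le,
      rpow_natCast]
  refine le_of_pow_le_pow_left₀ hn (rpow_nonneg ha.le _) ?_
  rwa [hpow, ← one_div, le_div_iff₀ (by positivity)]

lemma log_three_lt_two_mul_log_two : log 3 < 2 * log 2 := by
  rw [← log_rpow two_pos]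
  exact log_lt_log (by norm_num) (by norm_num)

lemma half_lt_logb_three_two : 1 / 2 < logb 3 2 := by
  rw [logb, lt_div_iff₀ (log_pos (by norm_num))]
  linarith [log_three_lt_two_mul_log_two]

lemma three_rpow_neg_lt_half {u : ℝ} (hu : logb 3 2 < u) : (3 : ℝ) ^ (-u) < 1 / 2 := by
  calc (3 : ℝ) ^ (-u) < 3 ^ (-logb 3 2) := rpow_lt_rpow_of_exponent_lt (by norm_num) (neg_lt_neg hu)
    _ = 1 / 2 := by rw [rpow_neg (by norm_num), rpow_logb (by norm_num) (by norm_num) two_pos, one_div]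

noncomputable def truncF (u : ℝ) : ℝ :=
  (2 : ℝ) ^ (-(2 * u)) + (3 : ℝ) ^ (-(2 * u)) + (4 : ℝ) ^ (-(2 * u)) - 2 * (3 : ℝ) ^ (-u)

lemma hasDerivAt_truncF (u : ℝ) :
    HasDerivAt truncF (2 * log 3 * 3 ^ (-u) -
      2 * (log 2 * 2 ^ (-(2 * u)) + log 3 * 3 ^ (-(2 * u)) + log 4 * 4 ^ (-(2 * u)))) u := by
  have hlin : HasDerivAt (fun u : ℝ => -(2 * u)) (-2) u := by
    simpa using ((hasDerivAt_id' u).const_mul 2).fun_neg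
  have h := (((hlin.const_rpow two_pos).add (hlin.const_rpow three_pos)).add
    (hlin.const_rpow four_pos)).sub (((hasDerivAt_neg' u).const_rpow three_pos).const_mul 2)
  exact h.congr_deriv (by ring)

lemma deriv_truncF_neg {u : ℝ} (hu : logb 3 2 < u) (hu' : u < 2 / 3) : deriv truncF u < 0 := by
  have hexp : (-(4 / 3) : ℝ) ≤ -(2 * u) := by linarith
  have hbound {a c : ℝ} (ha : 1 ≤ a) (h : c ^ 3 * a ^ 4 ≤ 1) : c ≤ a ^ (-(2 * u)) := by
    have := le_rpow_neg_div_of_pow_mul_pow_le_one (m := 4) (zero_lt_one.trans_le ha) (by norm_num) h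
    norm_num at this
    exact this.trans (rpow_le_rpow_of_exponent_le ha hexp)
  have h2 : 1 / 3 ≤ (2 : ℝ) ^ (-(2 * u)) := hbound (by norm_num) (by norm_num)
  have h3 : 2 / 9 ≤ (3 : ℝ) ^ (-(2 * u)) := hbound (by norm_num) (by norm_num)
  have h4 : 1 / 8 ≤ (4 : ℝ) ^ (-(2 * u)) := hbound (by norm_num) (by norm_num)
  have hlog4 : log 4 = 2 * log 2 := by
    rw [show (4 : ℝ) = 2 ^ 2 by norm_num, log_pow]; norm_num
  have hlog2 := log_pos (by norm_num : (1 : ℝ) < 2)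
  have hlog3 := log_pos (by norm_num : (1 : ℝ) < 3)
  rw [(hasDerivAt_truncF u).deriv, hlog4]
  -- With `log 3 < 2 log 2` these give `(7/12) log 2 + (2/9) log 3 > (37/72) log 3 > log 3 · 3^{-u}`.
  linarith [log_three_lt_two_mul_log_two,
    mul_le_mul_of_nonneg_left h2 hlog2.le, mul_le_mul_of_nonneg_left h3 hlog3.le,
    mul_le_mul_of_nonneg_left h4 hlog2.le, mul_lt_mul_of_pos_left (three_rpow_neg_lt_half hu) hlog3]

lemma truncF_strictAntiOn : StrictAntiOn truncF (Set.Icc (logb 3 2) (2 / 3)) := by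
  refine strictAntiOn_of_deriv_neg (convex_Icc _ _)
    (fun u _ => (hasDerivAt_truncF u).continuousAt.continuousWithinAt) fun u hu => ?_
  rw [interior_Icc] at hu
  exact deriv_truncF_neg hu.1 hu.2

lemma f_sub_truncF_antitoneOn :
    AntitoneOn (fun u => zetaR (2 * u) - 2 * (3 : ℝ) ^ (-u) - truncF u) (Set.Ioi (1 / 2)) := by
  intro s hs t _ hst
  have h := sum_sub_le_zetaR_sub {2, 3, 4} (by linarith [hs.out] : 1 < 2 * s)
    (by linarith : 2 * s ≤ 2 * t)
  rw [Finset.sum_insert (by decide), Finset.sum_insert (by decide), Finset.sum_singleton] at h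
  push_cast at h
  simp only [truncF]
  linarith

/-- The function `f(t) = ζ(2t) − 2·3^{-t}` is strictly decreasing on `[log_3 2, 2/3]`. -/
theorem f_strictAnti (s t : ℝ) (hs : Real.logb 3 2 ≤ s) (hst : s < t) (ht : t ≤ 2 / 3) :
    zetaR (2 * t) - 2 * (3 : ℝ) ^ (-t) < zetaR (2 * s) - 2 * (3 : ℝ) ^ (-s) := by
  have hs' : 1 / 2 < s := half_lt_logb_three_two.trans_le hs
  have hrest := f_sub_truncF_antitoneOn hs' (hs'.trans hst) hst.le
  have htrunc := truncF_strictAntiOn ⟨hs, by linarith⟩ ⟨by linarith, ht⟩ hst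
  linarith
end

section
/- For every real t with log_3(2) ≤ t ≤ 2/3, the following three inequalities hold: ζ(2t) − 1 − 2^{-t} − 3^{-t} > 1, 2^{-t} > 1 − 2^{-t}, and 1 − 3^{-t} ≥ 3^{-t}. -/
open Real Filter

private lemma rpow_lb {q n : ℝ} (hq : 0 ≤ q) (hn : 1 ≤ n) (h : q ^ 3 * n ^ 4 ≤ 1)
    {s : ℝ} (hs : s ≤ 4 / 3) : q ≤ n ^ (-s) := by
  have hn0 : (0 : ℝ) ≤ n := by linarith
  have h1 : q ≤ n ^ (-(4 / 3) : ℝ) := by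
    apply le_of_pow_le_pow_left₀ (n := 3) (by norm_num) (Real.rpow_nonneg hn0 _)
    have : (n ^ (-(4 / 3) : ℝ)) ^ (3 : ℕ) = n ^ (-(4 : ℝ)) := by
      rw [← Real.rpow_natCast (n ^ (-(4 / 3) : ℝ)) 3, ← Real.rpow_mul hn0]
      norm_num
    rw [this, show (-(4 : ℝ)) = -((4 : ℕ) : ℝ) by norm_num, Real.rpow_neg hn0,
      Real.rpow_natCast, inv_eq_one_div, le_div_iff₀ (by positivity)]
    exact h
  exact h1.trans (Real.rpow_le_rpow_of_exponent_le hn (by linarith))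

private lemma telescope_step {s : ℝ} (hs : 1 < s) {a : ℝ} (ha : 1 ≤ a) :
    (a ^ (1 - s) - (a + 1) ^ (1 - s)) / (s - 1) ≤ a ^ (-s) := by
  have ha0 : 0 < a := by linarith
  obtain ⟨c, hc, hceq⟩ := exists_hasDerivAt_eq_slope (fun x : ℝ => x ^ (1 - s))
      (fun x : ℝ => (1 - s) * x ^ (1 - s - 1)) (by linarith : a < a + 1)
      (ContinuousOn.rpow_const continuousOn_id fun x hx =>
        Or.inl (by rcases hx with ⟨h1, _⟩; intro h0; rw [h0] at h1; linarith))
      (fun x hx => Real.hasDerivAt_rpow_const (Or.inl (by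
        rcases hx with ⟨h1, _⟩
        have hx0 : (0:ℝ) < x := by linarith
        exact hx0.ne')))
  have hca : a ≤ c := le_of_lt hc.1
  have hc0 : 0 < c := by linarith
  have key : a ^ (1 - s) - (a + 1) ^ (1 - s) = (s - 1) * c ^ (-s) := by
    have := hceq
    rw [add_sub_cancel_left, div_one] at this
    have h2 : (1 - s) * c ^ (1 - s - 1) = (a + 1) ^ (1 - s) - a ^ (1 - s) := this
    have h3 : (1 - s - 1) = -s := by ring
    rw [h3] at h2
    linarith [h2]
  rw [key]
  have hc' : c ^ (-s) ≤ a ^ (-s) :=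
    Real.rpow_le_rpow_of_nonpos ha0 hca (by linarith)
  rw [div_le_iff₀ (by linarith : (0:ℝ) < s - 1)]
  calc (s - 1) * c ^ (-s) ≤ (s - 1) * a ^ (-s) := by
        apply mul_le_mul_of_nonneg_left hc' (by linarith)
    _ = a ^ (-s) * (s - 1) := by ring

private lemma zetaR_lower {s : ℝ} (hs1 : 1 < s) (hs2 : s ≤ 4 / 3) :
    (16 : ℝ) / 5 ≤ zetaR s := by
  -- reindex to ℕ
  have hre : zetaR s = ∑' n : ℕ, ((n : ℝ) + 1) ^ (-s) := by
    rw [zetaR, ← Equiv.tsum_eq Equiv.pnatEquivNat.symm (fun n : ℕ+ => (n : ℝ) ^ (-s))]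
    apply tsum_congr
    intro n
    simp [Equiv.pnatEquivNat, Nat.succPNat]
  have hsum : Summable (fun n : ℕ => ((n : ℝ) + 1) ^ (-s)) := by
    have h0 : Summable (fun n : ℕ => (n : ℝ) ^ (-s)) :=
      Real.summable_nat_rpow.mpr (by linarith)
    have := (summable_nat_add_iff 1).mpr h0
    refine this.congr fun n => ?_
    push_cast
    ring_nf
  rw [hre, ← Summable.sum_add_tsum_nat_add 7 hsum]
  -- tail bound
  set F : ℕ → ℝ := fun n => ((n : ℝ) + 8) ^ (1 - s) / (s - 1) with hF
  have hFanti : ∀ n : ℕ, F (n + 1) ≤ F n := by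
    intro n
    apply div_le_div_of_nonneg_right ?_ (by linarith)
    · apply Real.rpow_le_rpow_of_nonpos (by positivity) (by push_cast; linarith) (by linarith)
  have hg : ∀ i : ℕ, 0 ≤ F i - F (i + 1) := fun i => sub_nonneg.mpr (hFanti i)
  have hFlim : Tendsto F atTop (nhds 0) := by
    rw [hF]
    have h1 : Tendsto (fun n : ℕ => ((n : ℝ) + 8)) atTop atTop :=
      tendsto_atTop_add_const_right _ _ tendsto_natCast_atTop_atTop
    have h2 : Tendsto (fun x : ℝ => x ^ (-(s - 1))) atTop (nhds 0) :=
      tendsto_rpow_neg_atTop (by linarith)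
    have h3 : Tendsto (fun n : ℕ => ((n : ℝ) + 8) ^ (1 - s)) atTop (nhds 0) := by
      have := h2.comp h1
      refine this.congr fun n => ?_
      simp only [Function.comp]
      norm_num
    simpa using h3.div_const (s - 1)
  have hHasSum : HasSum (fun i : ℕ => F i - F (i + 1)) (F 0) := by
    rw [hasSum_iff_tendsto_nat_of_nonneg hg]
    have : ∀ n : ℕ, ∑ i ∈ Finset.range n, (F i - F (i + 1)) = F 0 - F n := by
      intro n; exact Finset.sum_range_sub' F n
    simp_rw [this]
    simpa using tendsto_const_nhds.sub hFlim
  have htail : F 0 ≤ ∑' i : ℕ, (((i + 7 : ℕ) : ℝ) + 1) ^ (-s) := by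
    rw [← hHasSum.tsum_eq]
    apply Summable.tsum_le_tsum ?_ hHasSum.summable ((summable_nat_add_iff 7).mpr hsum)
    intro i
    have h8 : ((i : ℝ) + 8) + 1 = ((i : ℝ) + 1) + 8 := by ring
    have hi0 : (0:ℝ) ≤ (i:ℝ) := Nat.cast_nonneg i
    have := telescope_step hs1 (a := (i : ℝ) + 8) (by linarith)
    calc F i - F (i + 1)
        = (((i:ℝ) + 8) ^ (1 - s) - (((i:ℝ) + 8) + 1) ^ (1 - s)) / (s - 1) := by
          rw [hF]; push_cast; rw [← sub_div]; ring_nf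
      _ ≤ ((i : ℝ) + 8) ^ (-s) := this
      _ = (((i + 7 : ℕ) : ℝ) + 1) ^ (-s) := by push_cast; ring_nf
  have hF0 : (3 : ℝ) / 2 ≤ F 0 := by
    rw [hF]
    simp only [Nat.cast_zero, zero_add]
    have h8 : (8 : ℝ) ^ (-(1 / 3) : ℝ) = 1 / 2 := by
      rw [show (8 : ℝ) = 2 ^ ((3 : ℕ) : ℝ) by rw [Real.rpow_natCast]; norm_num,
        ← Real.rpow_mul (by norm_num),
        show ((3:ℕ):ℝ) * (-(1/3) : ℝ) = -1 by push_cast; ring,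
        Real.rpow_neg (by norm_num), Real.rpow_one]
      norm_num
    have hnum : (1 : ℝ) / 2 ≤ (8 : ℝ) ^ (1 - s) := by
      rw [← h8]
      exact Real.rpow_le_rpow_of_exponent_le (by norm_num) (by linarith)
    calc (3:ℝ)/2 = (1/2) / (1/3) := by norm_num
      _ ≤ (8:ℝ) ^ (1 - s) / (s - 1) :=
        div_le_div₀ (Real.rpow_nonneg (by norm_num) _) hnum (by linarith) (by linarith)
  -- head bound
  have hhead : (177 : ℝ) / 100 ≤ ∑ i ∈ Finset.range 7, ((i : ℝ) + 1) ^ (-s) := by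
    rw [Finset.sum_range_succ, Finset.sum_range_succ, Finset.sum_range_succ,
      Finset.sum_range_succ, Finset.sum_range_succ, Finset.sum_range_succ,
      Finset.sum_range_succ, Finset.sum_range_zero]
    push_cast
    have e1 : ((0 : ℝ) + 1) ^ (-s) = 1 := by rw [zero_add, Real.one_rpow]
    have e2 : (39 : ℝ)/100 ≤ (2:ℝ) ^ (-s) :=
      rpow_lb (by norm_num) (by norm_num) (by norm_num) hs2
    have e3 : (23 : ℝ)/100 ≤ (3:ℝ) ^ (-s) :=
      rpow_lb (by norm_num) (by norm_num) (by norm_num) hs2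
    have e4 : (15 : ℝ)/100 ≤ (4:ℝ) ^ (-s) :=
      rpow_lb (by norm_num) (by norm_num) (by norm_num) hs2
    have e5 : (0:ℝ) ≤ (5:ℝ) ^ (-s) := Real.rpow_nonneg (by norm_num) _
    have e6 : (0:ℝ) ≤ (6:ℝ) ^ (-s) := Real.rpow_nonneg (by norm_num) _
    have e7 : (0:ℝ) ≤ (7:ℝ) ^ (-s) := Real.rpow_nonneg (by norm_num) _
    rw [zero_add, e1]
    norm_num
    linarith
  have := htail
  push_cast at this ⊢
  linarith [hF0.trans this, hhead]

/-- For `log_3 2 ≤ t ≤ 2/3`: `ζ(2t) − 1 − 2^{-t} − 3^{-t} > 1`, `2^{-t} > 1 − 2^{-t}`,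
and `1 − 3^{-t} ≥ 3^{-t}`. -/
theorem box_dimension_ineqs (t : ℝ) (ht₁ : Real.logb 3 2 ≤ t) (ht₂ : t ≤ 2 / 3) :
    1 < zetaR (2 * t) - 1 - (2 : ℝ) ^ (-t) - (3 : ℝ) ^ (-t) ∧
      1 - (2 : ℝ) ^ (-t) < (2 : ℝ) ^ (-t) ∧
      (3 : ℝ) ^ (-t) ≤ 1 - (3 : ℝ) ^ (-t) := by
  have hlog : (63 : ℝ) / 100 < Real.logb 3 2 := by
    rw [Real.lt_logb_iff_rpow_lt (by norm_num) (by norm_num)]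
    apply lt_of_pow_lt_pow_left₀ 100 (by norm_num : (0:ℝ) ≤ 2)
    have e : ((3 : ℝ) ^ ((63:ℝ)/100)) ^ (100 : ℕ) = 3 ^ (63 : ℕ) := by
      rw [← Real.rpow_natCast ((3:ℝ) ^ ((63:ℝ)/100)) 100, ← Real.rpow_mul (by norm_num),
        show (63:ℝ)/100 * ((100:ℕ):ℝ) = ((63:ℕ):ℝ) by push_cast; ring, Real.rpow_natCast]
    rw [e]
    norm_num
  have ht63 : (63 : ℝ) / 100 < t := lt_of_lt_of_le hlog ht₁
  have h3 : (3 : ℝ) ^ (-t) ≤ 1 / 2 := by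
    have h1 : (3 : ℝ) ^ (-t) ≤ (3 : ℝ) ^ (-Real.logb 3 2) :=
      Real.rpow_le_rpow_of_exponent_le (by norm_num) (by linarith)
    have h2 : (3 : ℝ) ^ (-Real.logb 3 2) = 1 / 2 := by
      rw [Real.rpow_neg (by norm_num), Real.rpow_logb (by norm_num) (by norm_num) (by norm_num)]
      norm_num
    linarith
  have h2lt : (2 : ℝ) ^ (-t) < 13 / 20 := by
    have h1 : (2 : ℝ) ^ (-t) < (2 : ℝ) ^ (-(63/100) : ℝ) :=
      Real.rpow_lt_rpow_of_exponent_lt (by norm_num) (by linarith)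
    have h2 : (2 : ℝ) ^ (-(63/100) : ℝ) ≤ 13 / 20 := by
      apply le_of_pow_le_pow_left₀ (n := 100) (by norm_num) (by norm_num)
      have e : ((2 : ℝ) ^ (-(63/100) : ℝ)) ^ (100 : ℕ) = ((2:ℝ) ^ (63:ℕ))⁻¹ := by
        rw [← Real.rpow_natCast ((2:ℝ) ^ (-(63/100):ℝ)) 100, ← Real.rpow_mul (by norm_num)]
        rw [show (-(63/100) : ℝ) * (100:ℕ) = -((63:ℕ):ℝ) by push_cast; ring,
          Real.rpow_neg (by norm_num), Real.rpow_natCast]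
      rw [e, inv_le_comm₀ (by positivity) (by positivity)]
      norm_num
    linarith
  have h2gt : (1 : ℝ) / 2 < (2 : ℝ) ^ (-t) := by
    have h1 : (2 : ℝ) ^ (-(1:ℝ)) < (2 : ℝ) ^ (-t) :=
      Real.rpow_lt_rpow_of_exponent_lt (by norm_num) (by linarith)
    rwa [Real.rpow_neg (by norm_num), Real.rpow_one,
      show ((2:ℝ))⁻¹ = 1/2 by norm_num] at h1
  have hz : (16 : ℝ) / 5 ≤ zetaR (2 * t) := zetaR_lower (by linarith) (by linarith)
  refine ⟨by linarith, by linarith, by linarith⟩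
end
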